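/- Degree bounds from an eigenvaluation at infinity. Let K be an algebraically closed field of characteristic zero and f : 𝔸² → 𝔸² a dominant polynomial map. Let v be a normalized semivaluation on R = K[z₁,z₂] centered at infinity and suppose: (1) there is a constant α with 0 < α ≤ 1 such that −deg φ ≤ v(φ) ≤ −α·deg φ for every nonconstant φ ∈ R, and (2) there is a real number d > 0 such that v(f*φ) = d·v(φ) for all φ ∈ R. Then dⁿ ≤ deg fⁿ ≤ α⁻¹·dⁿ for all n ≥ 1; in particular d_∞(f) = d. -/

import Mathlib

open Filter

/-- `deg fⁿ = max(deg (fⁿ)₁, deg (fⁿ)₂)` (total degrees), where the polynomial map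
`f : 𝔸² → 𝔸²` is encoded by its pullback `σ = f*`. -/
noncomputable def degSeq {K : Type*} [Field K]
    (σ : MvPolynomial (Fin 2) K →ₐ[K] MvPolynomial (Fin 2) K) (n : ℕ) : ℕ :=
  max (((⇑σ)^[n] (MvPolynomial.X 0)).totalDegree)
      (((⇑σ)^[n] (MvPolynomial.X 1)).totalDegree)

/-- A normalized semivaluation on `R = K[z₁,z₂]` centered at infinity. -/
def IsSemivalAtInfinity {K : Type*} [Field K] (v : MvPolynomial (Fin 2) K → EReal) : Prop :=
  (∀ φ, v φ ≠ ⊥) ∧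
  (∀ φ ψ, v (φ * ψ) = v φ + v ψ) ∧
  (∀ φ ψ, min (v φ) (v ψ) ≤ v (φ + ψ)) ∧
  (∀ c : K, c ≠ 0 → v (MvPolynomial.C c) = 0) ∧
  v 0 = ⊤ ∧
  min (v (MvPolynomial.X 0)) (v (MvPolynomial.X 1)) = -1

open Topology MvPolynomial

/-!
Iterating the eigenvalue equation gives `v((fⁿ)*zᵢ) = dⁿ·v(zᵢ)`, with `v(zᵢ) ∈ [-1, -α]` and
`v(zᵢ) = -1` for at least one `i`. The comparison `-deg φ ≤ v(φ) ≤ -α·deg φ`, applied to the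
coordinates of `fⁿ`, turns this into `dⁿ ≤ deg fⁿ ≤ α⁻¹·dⁿ`, and taking `n`-th roots squeezes
`(deg fⁿ)^{1/n}` to `d`.
-/

lemma Real.tendsto_rpow_inv_of_pow_le_of_le_mul_pow {u : ℕ → ℝ} {d C : ℝ} (hd : 0 < d)
    (hC : 0 < C) (hlow : ∀ᶠ n in atTop, d ^ n ≤ u n) (hup : ∀ᶠ n in atTop, u n ≤ C * d ^ n) :
    Tendsto (fun n : ℕ => u n ^ (n : ℝ)⁻¹) atTop (𝓝 d) := by
  have hroot : Tendsto (fun n : ℕ => C ^ (n : ℝ)⁻¹ * d) atTop (𝓝 d) := by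
    have := ((Real.continuousAt_const_rpow hC.ne').tendsto.comp
      tendsto_inv_atTop_nhds_zero_nat).mul_const d
    simpa using this
  refine tendsto_of_tendsto_of_tendsto_of_le_of_le' tendsto_const_nhds hroot ?_ ?_
  · filter_upwards [hlow, eventually_ne_atTop 0] with n hn hn0
    calc d = (d ^ n) ^ (n : ℝ)⁻¹ := (Real.pow_rpow_inv_natCast hd.le hn0).symm
      _ ≤ u n ^ (n : ℝ)⁻¹ := by gcongr
  · filter_upwards [hlow, hup, eventually_ne_atTop 0] with n hn hn' hn0
    calc u n ^ (n : ℝ)⁻¹ ≤ (C * d ^ n) ^ (n : ℝ)⁻¹ := by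
          gcongr
          exact (pow_pos hd n).le.trans hn
      _ = C ^ (n : ℝ)⁻¹ * d := by
          rw [Real.mul_rpow hC.le (by positivity), Real.pow_rpow_inv_natCast hd.le hn0]

lemma apply_iterate_eq_pow_mul {R : Type*} {σ : R → R} {v : R → EReal} {d : ℝ}
    (heigen : ∀ φ, v (σ φ) = d * v φ) (n : ℕ) (φ : R) :
    v (σ^[n] φ) = ((d ^ n : ℝ) : EReal) * v φ := by
  induction n with
  | zero => simp
  | succ n ih =>
    rw [Function.iterate_succ_apply', heigen, ih, ← mul_assoc, ← EReal.coe_mul, pow_succ']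

section degSeq

variable {K : Type*} [Field K]

lemma le_degSeq (σ : MvPolynomial (Fin 2) K →ₐ[K] MvPolynomial (Fin 2) K) (n : ℕ) (i : Fin 2) :
    ((⇑σ)^[n] (X i)).totalDegree ≤ degSeq σ n := by
  fin_cases i
  exacts [le_max_left _ _, le_max_right _ _]

lemma exists_degSeq_eq (σ : MvPolynomial (Fin 2) K →ₐ[K] MvPolynomial (Fin 2) K) (n : ℕ) :
    ∃ i : Fin 2, degSeq σ n = ((⇑σ)^[n] (X i)).totalDegree :=
  (max_choice _ _).elim (fun h => ⟨0, h⟩) (fun h => ⟨1, h⟩)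

end degSeq

namespace IsSemivalAtInfinity

variable {K : Type*} [Field K] {v : MvPolynomial (Fin 2) K → EReal}

lemma nonneg_of_totalDegree_eq_zero (hv : IsSemivalAtInfinity v) {φ : MvPolynomial (Fin 2) K}
    (hφ : φ.totalDegree = 0) : 0 ≤ v φ := by
  rw [totalDegree_eq_zero_iff_eq_C.mp hφ]
  by_cases hc : coeff 0 φ = 0
  · simp [hc, hv.2.2.2.2.1]
  · rw [hv.2.2.2.1 _ hc]

lemma exists_eq_coe (hv : IsSemivalAtInfinity v) {φ : MvPolynomial (Fin 2) K} {r : ℝ}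
    (hφ : v φ ≤ r) : ∃ b : ℝ, v φ = b :=
  ⟨_, (EReal.coe_toReal (hφ.trans_lt (EReal.coe_lt_top r)).ne (hv.1 φ)).symm⟩

lemma exists_apply_X_eq_neg_one (hv : IsSemivalAtInfinity v) :
    ∃ i : Fin 2, v (X i) = ((-1 : ℝ) : EReal) :=
  (min_choice (v (X 0)) (v (X 1))).elim
    (fun h => ⟨0, by rw [← h, hv.2.2.2.2.2]; norm_num⟩)
    (fun h => ⟨1, by rw [← h, hv.2.2.2.2.2]; norm_num⟩)

/-- A point of negative value is nonconstant, so the comparison with the degree applies to it. -/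
lemma totalDegree_bounds_of_eq_coe (hv : IsSemivalAtInfinity v) {α : ℝ}
    (hbound : ∀ φ : MvPolynomial (Fin 2) K, 0 < φ.totalDegree →
      ((-(φ.totalDegree : ℝ) : ℝ) : EReal) ≤ v φ ∧
        v φ ≤ ((-(α * (φ.totalDegree : ℝ)) : ℝ) : EReal))
    {φ : MvPolynomial (Fin 2) K} {r : ℝ} (hφ : v φ = r) (hr : r < 0) :
    α * φ.totalDegree ≤ -r ∧ -r ≤ φ.totalDegree := by
  have hpos : 0 < φ.totalDegree := by
    by_contra! h
    have := hv.nonneg_of_totalDegree_eq_zero (Nat.le_zero.mp h)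
    rw [hφ] at this
    exact hr.not_ge (mod_cast this)
  obtain ⟨hlow, hup⟩ := hbound φ hpos
  rw [hφ, EReal.coe_le_coe_iff] at hlow hup
  constructor <;> linarith

lemma totalDegree_iterate_bounds (hv : IsSemivalAtInfinity v) {α : ℝ}
    (hbound : ∀ φ : MvPolynomial (Fin 2) K, 0 < φ.totalDegree →
      ((-(φ.totalDegree : ℝ) : ℝ) : EReal) ≤ v φ ∧
        v φ ≤ ((-(α * (φ.totalDegree : ℝ)) : ℝ) : EReal))
    {σ : MvPolynomial (Fin 2) K →ₐ[K] MvPolynomial (Fin 2) K} {d : ℝ} (hd : 0 < d)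
    (heigen : ∀ φ : MvPolynomial (Fin 2) K, v (σ φ) = (d : EReal) * v φ)
    {φ : MvPolynomial (Fin 2) K} {b : ℝ} (hφ : v φ = b) (hb : b < 0) (n : ℕ) :
    α * ((⇑σ)^[n] φ).totalDegree ≤ d ^ n * -b ∧ d ^ n * -b ≤ ((⇑σ)^[n] φ).totalDegree := by
  rw [mul_neg]
  refine hv.totalDegree_bounds_of_eq_coe hbound ?_ (mul_neg_of_pos_of_neg (pow_pos hd n) hb)
  rw [apply_iterate_eq_pow_mul heigen, hφ, EReal.coe_mul]

end IsSemivalAtInfinity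

theorem degree_bounds_from_eigenvaluation_general {K : Type*} [Field K]
    (σ : MvPolynomial (Fin 2) K →ₐ[K] MvPolynomial (Fin 2) K)
    (v : MvPolynomial (Fin 2) K → EReal) (hv : IsSemivalAtInfinity v)
    (α : ℝ) (hα0 : 0 < α)
    (hbound : ∀ φ : MvPolynomial (Fin 2) K, 0 < φ.totalDegree →
      ((-(φ.totalDegree : ℝ) : ℝ) : EReal) ≤ v φ ∧
        v φ ≤ ((-(α * (φ.totalDegree : ℝ)) : ℝ) : EReal))
    (d : ℝ) (hd : 0 < d)
    (heigen : ∀ φ : MvPolynomial (Fin 2) K, v (σ φ) = (d : EReal) * v φ) :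
    (∀ n : ℕ, 1 ≤ n → d ^ n ≤ (degSeq σ n : ℝ) ∧ (degSeq σ n : ℝ) ≤ α⁻¹ * d ^ n) ∧
    Tendsto (fun n : ℕ => (degSeq σ n : ℝ) ^ (n : ℝ)⁻¹) atTop (nhds d) := by
  have hX (i : Fin 2) : ∃ b : ℝ, v (X i) = b ∧ -1 ≤ b ∧ b ≤ -α := by
    obtain ⟨hlow, hup⟩ := hbound (X i) (by simp)
    obtain ⟨b, hb⟩ := hv.exists_eq_coe hup
    rw [hb, EReal.coe_le_coe_iff] at hlow hup
    exact ⟨b, hb, by simpa using hlow, by simpa using hup⟩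
  have hbounds (n : ℕ) : d ^ n ≤ (degSeq σ n : ℝ) ∧ (degSeq σ n : ℝ) ≤ α⁻¹ * d ^ n := by
    constructor
    · obtain ⟨i, hi⟩ := hv.exists_apply_X_eq_neg_one
      calc d ^ n = d ^ n * -(-1) := by ring
        _ ≤ ((⇑σ)^[n] (X i)).totalDegree :=
          (hv.totalDegree_iterate_bounds hbound hd heigen hi (by norm_num) n).2
        _ ≤ degSeq σ n := mod_cast le_degSeq σ n i
    · obtain ⟨i, hi⟩ := exists_degSeq_eq σ n
      obtain ⟨b, hb, hb1, hbα⟩ := hX i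
      have hdeg := (hv.totalDegree_iterate_bounds hbound hd heigen hb (by linarith) n).1
      rw [hi, le_inv_mul_iff₀ hα0]
      exact hdeg.trans (mul_le_of_le_one_right (pow_pos hd n).le (by linarith))
  exact ⟨fun n _ => hbounds n, Real.tendsto_rpow_inv_of_pow_le_of_le_mul_pow hd (inv_pos.mpr hα0)
    (.of_forall fun n => (hbounds n).1) (.of_forall fun n => (hbounds n).2)⟩

/-- **Degree bounds from an eigenvaluation at infinity.** If a normalized semivaluation
`v` centered at infinity satisfies `−deg φ ≤ v(φ) ≤ −α·deg φ` for all nonconstant `φ`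
(for some `0 < α ≤ 1`) and `v ∘ f* = d·v` with `d > 0`, then
`dⁿ ≤ deg fⁿ ≤ α⁻¹·dⁿ` for all `n ≥ 1`; in particular `d_∞(f) = d`. -/
theorem degree_bounds_from_eigenvaluation {K : Type*} [Field K] [IsAlgClosed K] [CharZero K]
    (σ : MvPolynomial (Fin 2) K →ₐ[K] MvPolynomial (Fin 2) K)
    (hdom : Function.Injective σ)
    (v : MvPolynomial (Fin 2) K → EReal) (hv : IsSemivalAtInfinity v)
    (α : ℝ) (hα0 : 0 < α) (hα1 : α ≤ 1)
    (hbound : ∀ φ : MvPolynomial (Fin 2) K, 0 < φ.totalDegree →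
      ((-(φ.totalDegree : ℝ) : ℝ) : EReal) ≤ v φ ∧
        v φ ≤ ((-(α * (φ.totalDegree : ℝ)) : ℝ) : EReal))
    (d : ℝ) (hd : 0 < d)
    (heigen : ∀ φ : MvPolynomial (Fin 2) K, v (σ φ) = (d : EReal) * v φ) :
    (∀ n : ℕ, 1 ≤ n → d ^ n ≤ (degSeq σ n : ℝ) ∧ (degSeq σ n : ℝ) ≤ α⁻¹ * d ^ n) ∧
    Tendsto (fun n : ℕ => (degSeq σ n : ℝ) ^ (n : ℝ)⁻¹) atTop (nhds d) :=
  degree_bounds_from_eigenvaluation_general σ v hv α hα0 hbound d hd heigen
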